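/- arXiv:1809.04979 — 5 statements merged into one kernel-verified Lean document; each statement's English description precedes it below -/
import Mathlib

section
/- In a finite multi-objective game admitting an exact vector-valued potential function Φ, an action-profile a is a Pareto-Nash equilibrium if and only if a is locally efficient for Φ, i.e., Φ(a) is Pareto-efficient among the set {Φ(bⁱ, a⁻ⁱ) : i ∈ N, bⁱ ∈ Aⁱ}. -/
/-- Strict Pareto-dominance on `ℝᵈ`: `x` dominates `y`. -/
def ParetoDom {d : ℕ} (x y : Fin d → ℝ) : Prop :=
  (∀ k, y k ≤ x k) ∧ x ≠ y

/-- Pareto-Nash equilibrium of a multi-objective game. -/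
def IsPNE {n d : ℕ} {A : Fin n → Type*} (u : Fin n → (∀ i, A i) → Fin d → ℝ)
    (a : ∀ i, A i) : Prop :=
  ∀ i, ¬ ∃ b : A i, ParetoDom (u i (Function.update a i b)) (u i a)

/-- Local efficiency of a profile for a vector-valued function `Φ`. -/
def IsLocEff {n d : ℕ} {A : Fin n → Type*} (Φ : (∀ i, A i) → Fin d → ℝ)
    (a : ∀ i, A i) : Prop :=
  ¬ ∃ (i : Fin n) (b : A i), ParetoDom (Φ (Function.update a i b)) (Φ a)

/-- `Φ` is an exact vector-valued potential for the game `u`. -/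
def IsPotential {n d : ℕ} {A : Fin n → Type*} (u : Fin n → (∀ i, A i) → Fin d → ℝ)
    (Φ : (∀ i, A i) → Fin d → ℝ) : Prop :=
  ∀ (a : ∀ i, A i) (i : Fin n) (b : A i) (k : Fin d),
    Φ (Function.update a i b) k - Φ a k = u i (Function.update a i b) k - u i a k

theorem ParetoDom.of_sub_eq {d : ℕ} {x y x' y' : Fin d → ℝ} (h : x - y = x' - y')
    (hxy : ParetoDom x y) : ParetoDom x' y' := by
  refine ⟨fun k => ?_, fun hx' => hxy.2 ?_⟩
  · have hk := congrFun h k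
    simp only [Pi.sub_apply] at hk
    linarith [hxy.1 k]
  · rwa [← sub_eq_zero, h, sub_eq_zero]

theorem paretoDom_congr_sub {d : ℕ} {x y x' y' : Fin d → ℝ} (h : x - y = x' - y') :
    ParetoDom x y ↔ ParetoDom x' y' :=
  ⟨.of_sub_eq h, .of_sub_eq h.symm⟩

theorem IsPotential.paretoDom_iff {n d : ℕ} {A : Fin n → Type*}
    {u : Fin n → (∀ i, A i) → Fin d → ℝ} {Φ : (∀ i, A i) → Fin d → ℝ}
    (hΦ : IsPotential u Φ) (a : ∀ i, A i) (i : Fin n) (b : A i) :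
    ParetoDom (u i (Function.update a i b)) (u i a) ↔
      ParetoDom (Φ (Function.update a i b)) (Φ a) :=
  paretoDom_congr_sub (funext (hΦ a i b)).symm

theorem pne_iff_locEff_general {n d : ℕ} {A : Fin n → Type*}
    (u : Fin n → (∀ i, A i) → Fin d → ℝ) (Φ : (∀ i, A i) → Fin d → ℝ)
    (hΦ : IsPotential u Φ) (a : ∀ i, A i) :
    IsPNE u a ↔ IsLocEff Φ a := by
  simp only [IsPNE, IsLocEff, hΦ.paretoDom_iff, not_exists]

/-- In a finite MO game with exact potential `Φ`, a profile is a Pareto-Nash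
equilibrium iff it is locally efficient for `Φ`. -/
theorem pne_iff_locEff {n d : ℕ} {A : Fin n → Type*} [∀ i, Fintype (A i)]
    (u : Fin n → (∀ i, A i) → Fin d → ℝ) (Φ : (∀ i, A i) → Fin d → ℝ)
    (hΦ : IsPotential u Φ) (a : ∀ i, A i) :
    IsPNE u a ↔ IsLocEff Φ a :=
  pne_iff_locEff_general u Φ hΦ a
end

section
/- Every finite multi-objective game that admits an exact vector-valued potential function Φ has at least one Pareto-Nash equilibrium; equivalently, the set of locally efficient action-profiles of Φ over a finite nonempty set A is nonempty. -/
/-!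
An exact potential changes along a unilateral deviation by exactly the deviator's payoff change,
so the deviation Pareto-improves the deviator iff it Pareto-improves the potential. The sum of the
coordinates is strictly monotone for Pareto-dominance, hence a profile maximising `∑ k, Φ a k` over
the finite set of profiles admits no Pareto-improving deviation of the potential, and is therefore a
Pareto-Nash equilibrium.
-/

theorem paretoDom_iff_lt {d : ℕ} {x y : Fin d → ℝ} : ParetoDom x y ↔ y < x := by
  rw [lt_iff_le_and_ne, ne_comm]
  rfl

theorem paretoDom_congr_of_sub_eq {d : ℕ} {x x' y y' : Fin d → ℝ} (h : x' - x = y' - y) :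
    ParetoDom x' x ↔ ParetoDom y' y := by
  rw [paretoDom_iff_lt, paretoDom_iff_lt, ← sub_pos, h, sub_pos]

theorem ParetoDom.sum_lt {d : ℕ} {x y : Fin d → ℝ} (h : ParetoDom x y) :
    ∑ k, y k < ∑ k, x k :=
  Fintype.sum_strictMono (paretoDom_iff_lt.1 h)

def IsLocallyEfficient {n d : ℕ} {A : Fin n → Type*} (Φ : (∀ i, A i) → Fin d → ℝ)
    (a : ∀ i, A i) : Prop :=
  ∀ i (b : A i), ¬ ParetoDom (Φ (Function.update a i b)) (Φ a)

theorem IsPotential.isPNE_iff {n d : ℕ} {A : Fin n → Type*}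
    {u : Fin n → (∀ i, A i) → Fin d → ℝ} {Φ : (∀ i, A i) → Fin d → ℝ} (hΦ : IsPotential u Φ)
    (a : ∀ i, A i) : IsPNE u a ↔ IsLocallyEfficient Φ a := by
  refine forall_congr' fun i => not_exists.trans (forall_congr' fun b => not_congr ?_)
  exact paretoDom_congr_of_sub_eq (funext fun k => (hΦ a i b k).symm)

theorem isLocallyEfficient_of_forall_sum_le {n d : ℕ} {A : Fin n → Type*}
    {Φ : (∀ i, A i) → Fin d → ℝ} {a : ∀ i, A i} (ha : ∀ a', ∑ k, Φ a' k ≤ ∑ k, Φ a k) :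
    IsLocallyEfficient Φ a :=
  fun _ _ hdom => (ha _).not_gt hdom.sum_lt

theorem exists_isLocallyEfficient {n d : ℕ} {A : Fin n → Type*} [Finite (∀ i, A i)]
    [Nonempty (∀ i, A i)] (Φ : (∀ i, A i) → Fin d → ℝ) : ∃ a, IsLocallyEfficient Φ a :=
  let ⟨a, ha⟩ := Finite.exists_max fun a => ∑ k, Φ a k
  ⟨a, isLocallyEfficient_of_forall_sum_le ha⟩

/-- A finite MO game admitting an exact potential has a Pareto-Nash equilibrium. -/
theorem exists_pne_of_potential {n d : ℕ} {A : Fin n → Type*}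
    [∀ i, Fintype (A i)] [∀ i, Nonempty (A i)]
    (u : Fin n → (∀ i, A i) → Fin d → ℝ) (Φ : (∀ i, A i) → Fin d → ℝ)
    (hΦ : IsPotential u Φ) :
    ∃ a : ∀ i, A i, IsPNE u a := by
  obtain ⟨a, ha⟩ := exists_isLocallyEfficient Φ
  exact ⟨a, (hΦ.isPNE_iff a).2 ha⟩
end

section
/- Let Y ⊆ ℝᵈ be a set of vectors such that for each coordinate k the projection {yₖ : y ∈ Y} has at most M distinct values. Then the set of Pareto-efficient elements of Y has cardinality at most M^{d-1}. -/
/-- Pareto-efficient elements of a set. -/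
def EFF {d : ℕ} (X : Set (Fin d → ℝ)) : Set (Fin d → ℝ) :=
  {y ∈ X | ∀ x ∈ X, ¬ ParetoDom x y}

/-!
Two efficient points that agree in all coordinates but the last are comparable, hence equal.
So forgetting the last coordinate is injective on `EFF Y`, and its image lies in the product of
the `d - 1` remaining coordinate projections of `Y`, each of size at most `M`.
-/

theorem Set.ncard_le_pow_of_ncard_image_eval_le {ι α : Type*} [Fintype ι] {M : ℕ}
    (S : Set (ι → α)) (hfin : ∀ i, ((fun f => f i) '' S).Finite)
    (hM : ∀ i, ((fun f => f i) '' S).ncard ≤ M) :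
    S.ncard ≤ M ^ Fintype.card ι := by
  classical
  let t : ι → Finset α := fun i => (hfin i).toFinset
  have hsub : S ⊆ Fintype.piFinset t := fun f hf => by
    simpa [t] using fun i => ⟨f, hf, rfl⟩
  calc S.ncard ≤ (Fintype.piFinset t).card := by
        rw [← Set.ncard_coe_finset]
        exact Set.ncard_le_ncard hsub (Finset.finite_toSet _)
    _ = ∏ i, (t i).card := Fintype.card_piFinset t
    _ ≤ ∏ _i : ι, M := Finset.prod_le_prod' fun i _ => by
        simpa [t, Set.ncard_eq_toFinset_card _ (hfin i)] using hM i
    _ = M ^ Fintype.card ι := by simp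

section EFF

variable {d : ℕ} {Y : Set (Fin d → ℝ)} {x y : Fin d → ℝ}

theorem eq_of_mem_EFF_of_le (hx : x ∈ EFF Y) (hy : y ∈ Y) (hle : ∀ k, x k ≤ y k) : y = x :=
  by_contra fun hne => hx.2 y hy ⟨hle, hne⟩

theorem eq_of_mem_EFF_of_forall_ne_eq (i : Fin d) (hx : x ∈ EFF Y) (hy : y ∈ EFF Y)
    (hxy : ∀ k ≠ i, x k = y k) : x = y := by
  rcases le_total (x i) (y i) with h | h
  · refine (eq_of_mem_EFF_of_le hx hy.1 fun k => ?_).symm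
    by_cases hk : k = i
    · exact hk ▸ h
    · exact (hxy k hk).le
  · refine eq_of_mem_EFF_of_le hy hx.1 fun k => ?_
    by_cases hk : k = i
    · exact hk ▸ h
    · exact (hxy k hk).ge

end EFF

theorem injOn_init_EFF {n : ℕ} (Y : Set (Fin (n + 1) → ℝ)) : Set.InjOn Fin.init (EFF Y) :=
  fun x hx y hy hxy => eq_of_mem_EFF_of_forall_ne_eq (Fin.last n) hx hy fun k hk => by
    obtain ⟨j, rfl⟩ := Fin.exists_castSucc_eq.mpr hk
    exact congrFun hxy j

theorem eff_card_le_general {d M : ℕ} (Y : Set (Fin d → ℝ))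
    (hfin : ∀ k, ((fun y => y k) '' Y).Finite)
    (hM : ∀ k, ((fun y => y k) '' Y).ncard ≤ M) :
    (EFF Y).ncard ≤ M ^ (d - 1) := by
  cases d with
  | zero => simpa using Set.ncard_le_one_of_subsingleton (EFF Y)
  | succ n =>
    have hproj : ∀ j : Fin n,
        (fun f : Fin n → ℝ => f j) '' (Fin.init '' EFF Y) ⊆ (fun y => y j.castSucc) '' Y := by
      rintro j _ ⟨_, ⟨y, hy, rfl⟩, rfl⟩
      exact ⟨y, hy.1, rfl⟩
    rw [Nat.add_sub_cancel, ← (injOn_init_EFF Y).ncard_image]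
    simpa using Set.ncard_le_pow_of_ncard_image_eval_le (Fin.init '' EFF Y)
      (fun j => (hfin _).subset (hproj j))
      (fun j => (Set.ncard_le_ncard (hproj j) (hfin _)).trans (hM _))

/-- If each coordinate projection of `Y ⊆ ℝᵈ` takes at most `M` values, then
`Y` has at most `M^(d-1)` Pareto-efficient elements. -/
theorem eff_card_le {d M : ℕ} (hd : 1 ≤ d) (Y : Set (Fin d → ℝ))
    (hfin : ∀ k, ((fun y => y k) '' Y).Finite)
    (hM : ∀ k, ((fun y => y k) '' Y).ncard ≤ M) :
    (EFF Y).ncard ≤ M ^ (d - 1) :=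
  eff_card_le_general Y hfin hM
end

section
/- Given finite sets WST[E] = {y¹,...,y^q} ⊆ ℝ₊ᵈ and F = {z¹,...,z^m} ⊆ (ℝ₊∖{0})ᵈ, the set of guaranteed vectorial ratios R = ⋂_{t=1}^q ⋃_{z∈F} C(y^t / z) satisfies R = ⋃_{π : {1,...,q} → {1,...,m}} C(⋀_{t=1}^q y^t / z^{π(t)}), i.e., R is the cone-union generated by the set {⋀_{t=1}^q y^t / z^{π(t)} : π ∈ [m]^[q]}. -/
/-! The intersection of the unions distributes into a union over all selections `π` of
intersections of single cones, and an intersection of finitely many cones is the cone of the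
componentwise minimum. -/

/-- The cone of a nonnegative vector `x`: nonnegative vectors below `x`. -/
def Cone {d : ℕ} (x : Fin d → ℝ) : Set (Fin d → ℝ) :=
  {ρ | (∀ k, 0 ≤ ρ k) ∧ ∀ k, ρ k ≤ x k}

theorem cone_iInf_eq_iInter {d : ℕ} {ι : Type*} [Finite ι] [Nonempty ι] (x : ι → Fin d → ℝ) :
    Cone (fun k => ⨅ i, x i k) = ⋂ i, Cone (x i) := by
  ext ρ
  simp only [Cone, Set.mem_iInter, Set.mem_ofPred_eq]
  constructor
  · rintro ⟨hnonneg, hle⟩ i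
    exact ⟨hnonneg, fun k => (hle k).trans (ciInf_le (Set.finite_range _).bddBelow i)⟩
  · intro h
    exact ⟨(h (Classical.arbitrary ι)).1, fun k => le_ciInf fun i => (h i).2 k⟩

theorem ratios_eq_coneUnion_of_minima_general {d q m : ℕ} (hq : 0 < q)
    (y : Fin q → Fin d → ℝ) (z : Fin m → Fin d → ℝ) :
    (⋂ t : Fin q, ⋃ s : Fin m, Cone (fun k => y t k / z s k)) =
      ⋃ π : Fin q → Fin m, Cone (fun k => ⨅ t : Fin q, y t k / z (π t) k) := by
  have : Nonempty (Fin q) := ⟨⟨0, hq⟩⟩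
  simp only [cone_iInf_eq_iInter]
  exact iInf_iSup_eq

/-- The set of guaranteed vectorial ratios
`R = ⋂ₜ ⋃_z C(yᵗ/z)` is the cone-union generated by the componentwise minima
`⋀ₜ yᵗ / z^{π(t)}` over all selections `π`. -/
theorem ratios_eq_coneUnion_of_minima {d q m : ℕ} (hq : 0 < q)
    (y : Fin q → Fin d → ℝ) (z : Fin m → Fin d → ℝ)
    (hy : ∀ t k, 0 ≤ y t k) (hz : ∀ s k, 0 < z s k) :
    (⋂ t : Fin q, ⋃ s : Fin m, Cone (fun k => y t k / z s k)) =
      ⋃ π : Fin q → Fin m, Cone (fun k => ⨅ t : Fin q, y t k / z (π t) k) :=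
  ratios_eq_coneUnion_of_minima_general hq y z
end

section
/- Let E, F, 𝓔, 𝓕 ⊆ ℝ₊ᵈ and ε₁, ε₂ > 0 satisfy: (i) for every y ∈ 𝓔 there is y' ∈ E with y ≽ y'; (ii) for every y' ∈ E there is y ∈ 𝓔 with (1+ε₁)y' ≽ y; (iii) for every z' ∈ F there is z ∈ 𝓕 with z' ≽ z; (iv) for every z ∈ 𝓕 there is z' ∈ F with (1+ε₂)z ≽ z'. Define R[𝓔,𝓕] = {ρ ∈ ℝ₊ᵈ : ∀y ∈ 𝓔, ∃z ∈ 𝓕, y ≽ ρ⋆z} (with componentwise product ⋆), and similarly R[E,F]. Then R[E,F] ⊆ R[𝓔,𝓕], and for every ρ ∈ R[𝓔,𝓕] the vector ρ' = (1+ε₁)⁻¹(1+ε₂)⁻¹ ρ belongs to R[E,F]; in particular (1+ε₁)(1+ε₂)ρ' ≽ ρ. -/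
/-! Ratio guarantees transfer along coverings by chaining inequalities: if `y ≤ a • y'` and
`z' ≤ b • z`, then `y ≥ ρ ⋆ z` gives `y' ≥ a⁻¹ • y ≥ a⁻¹ • (ρ ⋆ z) ≥ (a⁻¹ b⁻¹ • ρ) ⋆ z'`.
The inclusion `R[E,F] ⊆ R[𝓔,𝓕]` is the case `a = b = 1` with the roles of the sets swapped. -/

/-- The set of guaranteed vectorial ratios of `E` to `F`. -/
def Ratios {d : ℕ} (E F : Set (Fin d → ℝ)) : Set (Fin d → ℝ) :=
  {ρ | (∀ k, 0 ≤ ρ k) ∧ ∀ y ∈ E, ∃ z ∈ F, ∀ k, ρ k * z k ≤ y k}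

theorem mem_ratios_of_covers {d : ℕ} {E F E' F' : Set (Fin d → ℝ)} {a b : ℝ}
    (ha : 0 < a) (hb : 0 < b)
    (hE : ∀ y' ∈ E', ∃ y ∈ E, ∀ k, y k ≤ a * y' k)
    (hF : ∀ z ∈ F, ∃ z' ∈ F', ∀ k, z' k ≤ b * z k)
    {ρ : Fin d → ℝ} (hρ : ρ ∈ Ratios E F) :
    (fun k => a⁻¹ * b⁻¹ * ρ k) ∈ Ratios E' F' := by
  obtain ⟨hρ_nonneg, hρ⟩ := hρ
  have hscaled_nonneg : ∀ k, 0 ≤ a⁻¹ * b⁻¹ * ρ k := fun k => by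
    have := hρ_nonneg k
    positivity
  refine ⟨hscaled_nonneg, fun y' hy' => ?_⟩
  obtain ⟨y, hyE, hy⟩ := hE y' hy'
  obtain ⟨z, hzF, hz⟩ := hρ y hyE
  obtain ⟨z', hz'F', hz'⟩ := hF z hzF
  refine ⟨z', hz'F', fun k => ?_⟩
  calc a⁻¹ * b⁻¹ * ρ k * z' k
      ≤ a⁻¹ * b⁻¹ * ρ k * (b * z k) := mul_le_mul_of_nonneg_left (hz' k) (hscaled_nonneg k)
    _ = a⁻¹ * (ρ k * z k) := by field_simp
    _ ≤ a⁻¹ * y k := mul_le_mul_of_nonneg_left (hz k) (by positivity)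
    _ ≤ y' k := (inv_mul_le_iff₀ ha).2 (hy k)

/-- Approximation lemma: under-coverings of equilibria and stick-coverings of
efficient outcomes transfer approximation guarantees to the ratio set. -/
theorem ratios_approx {d : ℕ} (E F 𝓔 𝓕 : Set (Fin d → ℝ)) (ε₁ ε₂ : ℝ)
    (hε₁ : 0 < ε₁) (hε₂ : 0 < ε₂)
    (h1 : ∀ y ∈ 𝓔, ∃ y' ∈ E, ∀ k, y' k ≤ y k)
    (h2 : ∀ y' ∈ E, ∃ y ∈ 𝓔, ∀ k, y k ≤ (1 + ε₁) * y' k)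
    (h3 : ∀ z' ∈ F, ∃ z ∈ 𝓕, ∀ k, z k ≤ z' k)
    (h4 : ∀ z ∈ 𝓕, ∃ z' ∈ F, ∀ k, z' k ≤ (1 + ε₂) * z k) :
    Ratios E F ⊆ Ratios 𝓔 𝓕 ∧
    ∀ ρ ∈ Ratios 𝓔 𝓕,
      (fun k => (1 + ε₁)⁻¹ * (1 + ε₂)⁻¹ * ρ k) ∈ Ratios E F ∧
      (∀ k, ρ k ≤ (1 + ε₁) * (1 + ε₂) * ((1 + ε₁)⁻¹ * (1 + ε₂)⁻¹ * ρ k)) := by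
  have hε₁' : 0 < 1 + ε₁ := by linarith
  have hε₂' : 0 < 1 + ε₂ := by linarith
  refine ⟨fun ρ hρ => ?_, fun ρ hρ => ⟨mem_ratios_of_covers hε₁' hε₂' h2 h4 hρ, fun k => ?_⟩⟩
  · simpa using mem_ratios_of_covers one_pos one_pos (a := 1) (b := 1)
      (fun y hy => by simpa using h1 y hy) (fun z' hz' => by simpa using h3 z' hz') hρ
  · exact le_of_eq (by field_simp)
end
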